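/- arXiv:math/9910144 — 6 statements merged into one kernel-verified Lean document; each statement's English description precedes it below -/
import Mathlib

section
/- Let X be a metric space, Y ⊆ X a finite subspace, and Y' = Y ∪ {x*} any one-point metric extension of Y (an abstract metric space containing Y isometrically plus one point). Then there exists f ∈ X† such that the metric space Y ∪ {f} (inside X†) is isometric to Y' under the identification x* ↔ f, where Y is identified with its image in X† via x ↦ d_x. -/
/-- A function belongs to the Katětov space `X†` of a metric space `X` if it is
1-Lipschitz and controlled by some finite nonempty subset `Y ⊆ X`. -/
def IsKatetov {X : Type*} [MetricSpace X] (f : X → ℝ) : Prop :=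
  LipschitzWith 1 f ∧
    ∃ Y : Finset X, Y.Nonempty ∧ ∀ x : X, f x = ⨅ y : Y, (dist x (y : X) + f y)

/-- One-point extension property of the Katětov space: if `Y` is a finite subspace of a
metric space `X` and `Y' = Y ∪ {x*}` is a one-point metric extension of `Y` (realized by
an isometric copy `ι '' Y` of `Y` in some metric space `Z` together with a point `x* ∈ Z`),
then there is `f ∈ X†` such that `Y ∪ {f}` (inside `X†`, where `X` embeds via `x ↦ d_x`
and `X†` carries the sup metric) is isometric to `Y'` under `x* ↔ f`. -/
theorem katetov_one_point_extension (X Z : Type*) [MetricSpace X] [MetricSpace Z]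
    (Y : Finset X) (hY : Y.Nonempty) (ι : X → Z)
    (hι : ∀ y₁ ∈ Y, ∀ y₂ ∈ Y, dist (ι y₁) (ι y₂) = dist y₁ y₂) (xstar : Z) :
    ∃ f : X → ℝ, IsKatetov f ∧
      (∀ y ∈ Y, f y = dist (ι y) xstar) ∧
      (∀ y ∈ Y, (⨆ z : X, |f z - dist z y|) = dist xstar (ι y)) := by
  classical
  obtain ⟨y₀, hy₀⟩ := hY
  haveI : Nonempty ↥Y := ⟨⟨y₀, hy₀⟩⟩
  set e : X → ℝ := fun y => dist (ι y) xstar with he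
  set f : X → ℝ := fun x => ⨅ y : Y, (dist x (y : X) + e y) with hf
  have hbdd : ∀ x : X, BddBelow (Set.range fun y : Y => dist x (y : X) + e y) :=
    fun x => Set.Finite.bddBelow (Set.finite_range _)
  have h_le : ∀ x : X, ∀ y ∈ Y, f x ≤ dist x y + e y := fun x y hy =>
    ciInf_le (hbdd x) ⟨y, hy⟩
  have h_ge : ∀ (x : X) (c : ℝ), (∀ y ∈ Y, c ≤ dist x y + e y) → c ≤ f x := fun x c h =>
    le_ciInf fun y => h y y.2
  have hfY : ∀ y ∈ Y, f y = e y := by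
    intro y hy
    apply le_antisymm
    · have := h_le y y hy; simpa using this
    · refine h_ge y (e y) fun y' hy' => ?_
      have h1 : dist (ι y) xstar ≤ dist (ι y) (ι y') + dist (ι y') xstar := dist_triangle _ _ _
      rw [hι y hy y' hy'] at h1
      simpa [he, dist_comm] using h1
  have hlip : ∀ a b : X, f a ≤ f b + dist a b := by
    intro a b
    rw [← sub_le_iff_le_add]
    refine h_ge b _ fun y hy => ?_
    have h1 := h_le a y hy
    have h2 : dist a y ≤ dist a b + dist b y := dist_triangle _ _ _
    linarith
  have hkey : ∀ (z y : X), y ∈ Y → |f z - dist z y| ≤ e y := by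
    intro z y hy
    rw [abs_sub_le_iff]
    constructor
    · have := h_le z y hy; linarith
    · rw [sub_le_iff_le_add]
      have hzf : dist z y - e y ≤ f z := by
        refine h_ge z _ fun y' hy' => ?_
        have h1 : dist z y ≤ dist z y' + dist y' y := dist_triangle _ _ _
        have h2 : dist (ι y') (ι y) ≤ dist (ι y') xstar + dist xstar (ι y) := dist_triangle _ _ _
        rw [hι y' hy' y hy] at h2
        have h3 : dist xstar (ι y) = e y := dist_comm _ _
        simp only [he] at *
        linarith
      linarith
  refine ⟨f, ⟨LipschitzWith.of_le_add hlip, Y, ⟨y₀, hy₀⟩, fun x => ?_⟩,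
    fun y hy => hfY y hy, fun y hy => ?_⟩
  · rw [show f x = ⨅ y : Y, (dist x (y : X) + e y) from rfl]
    exact iInf_congr fun y => by rw [hfY y y.2]
  · haveI : Nonempty X := ⟨y⟩
    have hbdd2 : BddAbove (Set.range fun z : X => |f z - dist z y|) :=
      ⟨e y, by rintro _ ⟨z, rfl⟩; exact hkey z y hy⟩
    apply le_antisymm
    · exact ciSup_le fun z => by rw [dist_comm xstar]; exact hkey z y hy
    · rw [dist_comm xstar]
      refine le_trans ?_ (le_ciSup hbdd2 y)
      rw [hfY y hy, dist_self, sub_zero, abs_of_nonneg dist_nonneg]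
end

section
/- Any two complete separable Urysohn metric spaces are isometric. -/
open Set Filter Topology

def IsUrysohn (M : Type*) [MetricSpace M] : Prop :=
  ∀ (X : Type) [MetricSpace X] [Fintype X] (Y : Set X) (φ : Y → M),
    Isometry φ → ∃ ψ : X → M, Isometry ψ ∧ ∀ y : Y, ψ y = φ y

lemma IsUrysohn.nonempty {M : Type*} [MetricSpace M] (h : IsUrysohn M) : Nonempty M := by
  obtain ⟨ψ, -, -⟩ := h PUnit (∅ : Set PUnit) (fun y => absurd y.2 (Set.notMem_empty _))
      (fun y => absurd y.2 (Set.notMem_empty _))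
  exact ⟨ψ PUnit.unit⟩

lemma one_point_ext {M N : Type*} [MetricSpace M] [MetricSpace N] (hN : IsUrysohn N)
    {k : ℕ} (u : Fin k → M) (v : Fin k → N)
    (hd : ∀ i j, dist (v i) (v j) = dist (u i) (u j)) (x : M) :
    ∃ y : N, ∀ i, dist y (v i) = dist x (u i) := by
  -- well-definedness
  have wd : ∀ i j : Fin k, u i = u j → v i = v j := by
    intro i j hij
    have : dist (v i) (v j) = 0 := by rw [hd, hij, dist_self]
    exact dist_eq_zero.1 this
  set S : Set M := insert x (Set.range u) with hS
  have hSfin : S.Finite := (Set.finite_range u).insert x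
  haveI : Fintype S := hSfin.fintype
  let e : S ≃ Fin (Fintype.card S) := Fintype.equivFin S
  letI : MetricSpace (Fin (Fintype.card S)) :=
    MetricSpace.induced e.symm e.symm.injective inferInstance
  let ι : Fin (Fintype.card S) → M := fun i => ((e.symm i : S) : M)
  have hι : ∀ a b, dist a b = dist (ι a) (ι b) := by
    intro a b
    rfl
  let Y : Set (Fin (Fintype.card S)) := ι ⁻¹' (Set.range u)
  let φ : Y → N := fun z => v (Classical.choose z.2)
  have hφ : ∀ z : Y, u (Classical.choose z.2) = ι z := fun z => Classical.choose_spec z.2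
  have φiso : Isometry φ := by
    apply Isometry.of_dist_eq
    intro a b
    show dist (v _) (v _) = _
    rw [hd, hφ a, hφ b, Subtype.dist_eq, hι]
  obtain ⟨ψ, ψiso, ψext⟩ := hN (Fin (Fintype.card S)) Y φ φiso
  have hxS : x ∈ S := Set.mem_insert _ _
  refine ⟨ψ (e ⟨x, hxS⟩), fun i => ?_⟩
  have huiS : u i ∈ S := Set.mem_insert_of_mem _ ⟨i, rfl⟩
  have hιe : ∀ (z : M) (hz : z ∈ S), ι (e ⟨z, hz⟩) = z := by
    intro z hz; simp [ι]
  have hYmem : e ⟨u i, huiS⟩ ∈ Y := by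
    show ι _ ∈ Set.range u
    rw [hιe]; exact ⟨i, rfl⟩
  have hv : ψ (e ⟨u i, huiS⟩) = v i := by
    rw [ψext ⟨_, hYmem⟩]
    show v _ = v i
    apply wd
    rw [hφ ⟨_, hYmem⟩]
    exact hιe _ _
  rw [← hv, ψiso.dist_eq, hι, hιe, hιe]

open Classical in
noncomputable def nextPt {α β : Type*} [MetricSpace α] [MetricSpace β] [Nonempty β]
    {n : ℕ} (u : Fin n → α) (v : Fin n → β) (x : α) : β :=
  if h : ∃ y : β, ∀ i, dist y (v i) = dist x (u i) then h.choose else Classical.arbitrary β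

open Classical in
lemma nextPt_spec {α β : Type*} [MetricSpace α] [MetricSpace β] [Nonempty β]
    {n : ℕ} (u : Fin n → α) (v : Fin n → β) (x : α)
    (h : ∃ y : β, ∀ i, dist y (v i) = dist x (u i)) :
    ∀ i, dist (nextPt u v x) (v i) = dist x (u i) := by
  rw [nextPt, dif_pos h]
  exact h.choose_spec

noncomputable def traj {M N : Type*} [MetricSpace M] [MetricSpace N] [Nonempty M] [Nonempty N]
    (xs : ℕ → M) (ys : ℕ → N) : ℕ → M × N
  | n =>
    if n % 2 = 0 then
      (xs (n / 2),
        nextPt (fun i : Fin n => (traj xs ys i).1) (fun i : Fin n => (traj xs ys i).2)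
          (xs (n / 2)))
    else
      (nextPt (fun i : Fin n => (traj xs ys i).2) (fun i : Fin n => (traj xs ys i).1)
          (ys (n / 2)),
        ys (n / 2))
  termination_by n => n
  decreasing_by all_goals exact i.2

section
variable {M N : Type*} [MetricSpace M] [MetricSpace N] [Nonempty M] [Nonempty N]

lemma traj_isom (hM : IsUrysohn M) (hN : IsUrysohn N) (xs : ℕ → M) (ys : ℕ → N) :
    ∀ n i, i < n →
      dist (traj xs ys n).2 (traj xs ys i).2 = dist (traj xs ys n).1 (traj xs ys i).1 := by
  intro n
  induction n using Nat.strong_induction_on with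
  | _ n IH =>
    intro i hi
    have key : ∀ a b : Fin n,
        dist (traj xs ys (a : ℕ)).2 (traj xs ys (b : ℕ)).2
          = dist (traj xs ys (a : ℕ)).1 (traj xs ys (b : ℕ)).1 := by
      intro a b
      rcases lt_trichotomy (a : ℕ) (b : ℕ) with h | h | h
      · rw [dist_comm, dist_comm (traj xs ys (a:ℕ)).1]
        exact IH b b.2 a h
      · rw [h]; simp
      · exact IH a a.2 b h
    by_cases h : n % 2 = 0
    · rw [traj, if_pos h]
      exact nextPt_spec _ _ _
        (one_point_ext hN _ _ key (xs (n / 2))) ⟨i, hi⟩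
    · rw [traj, if_neg h]
      have := nextPt_spec (fun j : Fin n => (traj xs ys (j:ℕ)).2)
        (fun j : Fin n => (traj xs ys (j:ℕ)).1) (ys (n / 2))
        (one_point_ext hM _ _ (fun a b => (key a b).symm) (ys (n / 2))) ⟨i, hi⟩
      exact this.symm

lemma traj_even (xs : ℕ → M) (ys : ℕ → N) (k : ℕ) : (traj xs ys (2 * k)).1 = xs k := by
  rw [traj, if_pos (by omega)]
  simp [Nat.mul_div_cancel_left]

lemma traj_odd (xs : ℕ → M) (ys : ℕ → N) (k : ℕ) : (traj xs ys (2 * k + 1)).2 = ys k := by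
  rw [traj, if_neg (by omega)]
  simp
  congr 1
  omega

end

lemma exists_isometry_of_denseRange {M N : Type*} [MetricSpace M] [MetricSpace N]
    [CompleteSpace N] (u : ℕ → M) (v : ℕ → N)
    (hiso : ∀ i j, dist (v i) (v j) = dist (u i) (u j)) (hdense : DenseRange u) :
    ∃ f : M → N, Isometry f ∧ ∀ n, f (u n) = v n := by
  have happrox : ∀ (x : M) (m : ℕ), ∃ k, dist x (u k) < 1 / (m + 1) := by
    intro x m
    have := Metric.denseRange_iff.1 hdense x (1 / (m + 1)) (by positivity)
    exact this
  choose a ha using happrox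
  -- the approximating sequence in N is Cauchy
  have hcauchy : ∀ x : M, CauchySeq fun m => v (a x m) := by
    intro x
    refine cauchySeq_of_le_tendsto_0 (fun m => 2 / ((m : ℝ) + 1)) ?_ ?_
    · intro p q m hp hq
      rw [hiso]
      calc dist (u (a x p)) (u (a x q)) ≤ dist (u (a x p)) x + dist x (u (a x q)) :=
            dist_triangle _ _ _
        _ ≤ 1 / (p + 1) + 1 / (q + 1) := by
            rw [dist_comm (u (a x p)) x]
            exact add_le_add (ha x p).le (ha x q).le
        _ ≤ 2 / (m + 1) := by
            have h1 : (1 : ℝ) / (p + 1) ≤ 1 / (m + 1) := by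
              apply one_div_le_one_div_of_le (by positivity)
              exact_mod_cast Nat.succ_le_succ hp
            have h2 : (1 : ℝ) / (q + 1) ≤ 1 / (m + 1) := by
              apply one_div_le_one_div_of_le (by positivity)
              exact_mod_cast Nat.succ_le_succ hq
            have h3 : (2:ℝ)/(m+1) = 1/(m+1)+1/(m+1) := by ring
            linarith
    · have : Filter.Tendsto (fun m : ℕ => 1 / ((m : ℝ) + 1)) atTop (𝓝 0) :=
        tendsto_one_div_add_atTop_nhds_zero_nat
      have := this.const_mul 2
      simpa [div_eq_mul_inv] using this
  have hlim : ∀ x : M, ∃ y : N, Tendsto (fun m => v (a x m)) atTop (𝓝 y) :=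
    fun x => cauchySeq_tendsto_of_complete (hcauchy x)
  choose f hf using hlim
  -- the approximating points converge to x
  have hux : ∀ x : M, Tendsto (fun m => u (a x m)) atTop (𝓝 x) := by
    intro x
    rw [tendsto_iff_dist_tendsto_zero]
    refine squeeze_zero (fun m => dist_nonneg) (fun m => ?_)
      tendsto_one_div_add_atTop_nhds_zero_nat
    rw [dist_comm]; exact (ha x m).le
  have hdistf : ∀ (x : M) (k : ℕ), dist (f x) (v k) = dist x (u k) := by
    intro x k
    have h1 : Tendsto (fun m => dist (v (a x m)) (v k)) atTop (𝓝 (dist (f x) (v k))) :=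
      (hf x).dist tendsto_const_nhds
    have h2 : Tendsto (fun m => dist (v (a x m)) (v k)) atTop (𝓝 (dist x (u k))) := by
      simp only [hiso]
      exact (hux x).dist tendsto_const_nhds
    exact tendsto_nhds_unique h1 h2
  have hext : ∀ k, f (u k) = v k := by
    intro k
    have := hdistf (u k) k
    rw [dist_self] at this
    exact dist_eq_zero.1 this
  refine ⟨f, Isometry.of_dist_eq fun x y => ?_, hext⟩
  have h1 : Tendsto (fun m => dist (v (a x m)) (f y)) atTop (𝓝 (dist (f x) (f y))) :=
    (hf x).dist tendsto_const_nhds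
  have h2 : Tendsto (fun m => dist (v (a x m)) (f y)) atTop (𝓝 (dist x y)) := by
    have : (fun m => dist (v (a x m)) (f y)) = fun m => dist y (u (a x m)) := by
      funext m
      rw [dist_comm, hdistf y]
    rw [this]
    have := (tendsto_const_nhds : Filter.Tendsto (fun _ : ℕ => y) atTop (𝓝 y)).dist (hux x)
    simpa [dist_comm] using this
  exact tendsto_nhds_unique h1 h2

/-- Any two complete separable Urysohn metric spaces are isometric. -/
theorem urysohn_unique (M N : Type*) [MetricSpace M] [MetricSpace N]
    [TopologicalSpace.SeparableSpace M] [TopologicalSpace.SeparableSpace N]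
    [CompleteSpace M] [CompleteSpace N]
    (hM : IsUrysohn M) (hN : IsUrysohn N) :
    Nonempty (M ≃ᵢ N) := by
  haveI : Nonempty M := hM.nonempty
  haveI : Nonempty N := hN.nonempty
  set xs : ℕ → M := TopologicalSpace.denseSeq M with hxs
  set ys : ℕ → N := TopologicalSpace.denseSeq N with hys
  set u : ℕ → M := fun n => (traj xs ys n).1 with hu
  set v : ℕ → N := fun n => (traj xs ys n).2 with hv
  have hiso : ∀ i j, dist (v i) (v j) = dist (u i) (u j) := by
    intro i j
    rcases lt_trichotomy i j with h | h | h
    · rw [dist_comm, dist_comm (u i)]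
      exact traj_isom hM hN xs ys j i h
    · rw [h]; simp
    · exact traj_isom hM hN xs ys i j h
  have hdenseu : DenseRange u := by
    have hsub : Set.range xs ⊆ Set.range u :=
      Set.range_subset_iff.2 fun k => ⟨2 * k, traj_even xs ys k⟩
    exact Dense.mono hsub (TopologicalSpace.denseRange_denseSeq M)
  obtain ⟨f, hf, hfext⟩ := exists_isometry_of_denseRange u v hiso hdenseu
  -- range of f is closed and dense, hence f is surjective
  have hclosed : IsClosed (Set.range f) :=
    hf.isUniformInducing.isComplete_range.isClosed
  have hdensef : Dense (Set.range f) := by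
    have hsub : Set.range ys ⊆ Set.range f := Set.range_subset_iff.2 fun k =>
      ⟨u (2 * k + 1), by rw [hfext]; exact traj_odd xs ys k⟩
    exact Dense.mono hsub (TopologicalSpace.denseRange_denseSeq N)
  have hsurj : Function.Surjective f := by
    rw [← Set.range_eq_univ]
    rw [← hclosed.closure_eq]
    exact hdensef.closure_eq
  exact ⟨⟨Equiv.ofBijective f ⟨hf.injective, hsurj⟩, hf⟩⟩
end

section
/- The complete separable Urysohn space 𝕌 contains an isometric copy of every separable metric space. -/
open Filter Topology

/-- One-point extension: given an isometric copy of `t 0, …, t (n-1)` in `M`, we can find a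
point of `M` at the right distances to play the role of `t n`. -/
lemma urysohn_step {M : Type*} [MetricSpace M] (hM : IsUrysohn M)
    {S : Type*} [MetricSpace S] (t : ℕ → S) (n : ℕ) (p : Fin n → M)
    (hp : ∀ i j : Fin n, dist (p i) (p j) = dist (t i) (t j)) :
    ∃ q : M, ∀ i : Fin n, dist q (p i) = dist (t n) (t i) := by
  have hfin : (t '' Set.Iic n).Finite := (Set.finite_Iic n).image t
  haveI hft : Fintype (t '' Set.Iic n) := hfin.fintype
  set k := Fintype.card (t '' Set.Iic n) with hk
  let e : Fin k ≃ (t '' Set.Iic n) := (Fintype.equivFin _).symm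
  let m : Fin k → S := fun i => (e i : S)
  have minj : Function.Injective m := fun a b hab => e.injective (Subtype.ext hab)
  letI : MetricSpace (Fin k) := MetricSpace.induced m minj inferInstance
  have hd : ∀ i j : Fin k, dist i j = dist (m i) (m j) := fun i j => rfl
  let Y : Set (Fin k) := {x | ∃ i : Fin n, t i = m x}
  let φ : Y → M := fun y => p (Classical.choose y.2)
  have hφ : ∀ (y : Y) (i : Fin n), t i = m (y : Fin k) → φ y = p i := by
    intro y i hi
    have hj := Classical.choose_spec y.2
    have h0 : dist (p (Classical.choose y.2)) (p i) = 0 := by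
      rw [hp, hj, hi]; simp
    exact eq_of_dist_eq_zero h0
  have hφiso : Isometry φ := by
    apply Isometry.of_dist_eq
    intro y z
    have hy := Classical.choose_spec y.2
    have hz := Classical.choose_spec z.2
    show dist (p _) (p _) = _
    rw [hp, hy, hz, Subtype.dist_eq, hd]
  obtain ⟨ψ, hψiso, hψext⟩ := hM (Fin k) Y φ hφiso
  have hmem : t n ∈ t '' Set.Iic n := ⟨n, le_refl n, rfl⟩
  have hma : m (e.symm ⟨t n, hmem⟩) = t n := by simp [m]
  refine ⟨ψ (e.symm ⟨t n, hmem⟩), ?_⟩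
  intro i
  have hmi : t i ∈ t '' Set.Iic n := ⟨i, le_of_lt i.isLt, rfl⟩
  have hmb : m (e.symm ⟨t i, hmi⟩) = t i := by simp [m]
  have hbY : e.symm ⟨t i, hmi⟩ ∈ Y := ⟨i, hmb.symm⟩
  have h1 : ψ (e.symm ⟨t i, hmi⟩) = p i := by
    rw [hψext ⟨e.symm ⟨t i, hmi⟩, hbY⟩]
    exact hφ _ i hmb.symm
  rw [← h1, hψiso.dist_eq, hd, hma, hmb]

/-- The recursively constructed partial isometric copies. -/
noncomputable def urysohnF {M S : Type*} [MetricSpace M] [MetricSpace S]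
    (hM : IsUrysohn M) (t : ℕ → S) :
    ∀ n : ℕ, {v : Fin n → M // ∀ i j : Fin n, dist (v i) (v j) = dist (t i) (t j)}
  | 0 => ⟨Fin.elim0, fun i => i.elim0⟩
  | n+1 =>
    ⟨Fin.snoc (urysohnF hM t n).1
        (Classical.choose (urysohn_step hM t n (urysohnF hM t n).1 (urysohnF hM t n).2)), by
      have hq := Classical.choose_spec (urysohn_step hM t n (urysohnF hM t n).1 (urysohnF hM t n).2)
      intro i j
      induction i using Fin.lastCases with
      | last =>
        induction j using Fin.lastCases with
        | last => simp
        | cast j => simpa using hq j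
      | cast i =>
        induction j using Fin.lastCases with
        | last => simpa [dist_comm] using hq i
        | cast j => simpa using (urysohnF hM t n).2 i j⟩

lemma urysohnF_agrees {M S : Type*} [MetricSpace M] [MetricSpace S]
    (hM : IsUrysohn M) (t : ℕ → S) :
    ∀ n : ℕ, ∀ i : Fin n, (urysohnF hM t n).1 i
      = (urysohnF hM t (i.val + 1)).1 (Fin.last i.val) := by
  intro n
  induction n with
  | zero => exact fun i => i.elim0
  | succ n ih =>
    intro i
    induction i using Fin.lastCases with
    | last => simp [urysohnF]
    | cast i =>
      have h1 : (urysohnF hM t (n+1)).1 i.castSucc = (urysohnF hM t n).1 i := by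
        simp [urysohnF]
      rw [h1]
      simpa using ih i

lemma exists_isometric_seq {M S : Type*} [MetricSpace M] [MetricSpace S]
    (hM : IsUrysohn M) (t : ℕ → S) :
    ∃ g : ℕ → M, ∀ i j : ℕ, dist (g i) (g j) = dist (t i) (t j) := by
  refine ⟨fun m => (urysohnF hM t (m+1)).1 (Fin.last m), fun i j => ?_⟩
  set n := max i j + 1 with hn
  have hi : i < n := lt_of_le_of_lt (le_max_left i j) (Nat.lt_succ_self _)
  have hj : j < n := lt_of_le_of_lt (le_max_right i j) (Nat.lt_succ_self _)
  have h1 := urysohnF_agrees hM t n ⟨i, hi⟩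
  have h2 := urysohnF_agrees hM t n ⟨j, hj⟩
  show dist ((urysohnF hM t (i + 1)).1 (Fin.last i)) ((urysohnF hM t (j + 1)).1 (Fin.last j))
      = dist (t i) (t j)
  rw [← h1, ← h2, (urysohnF hM t n).2]

/-- The complete separable Urysohn space contains an isometric copy of every separable
metric space. -/
theorem urysohn_universal (M : Type*) [MetricSpace M] [TopologicalSpace.SeparableSpace M]
    [CompleteSpace M] (hM : IsUrysohn M)
    (S : Type*) [MetricSpace S] [TopologicalSpace.SeparableSpace S] :
    ∃ f : S → M, Isometry f := by
  cases isEmpty_or_nonempty S with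
  | inl h => exact ⟨fun x => isEmptyElim x, fun x => isEmptyElim x⟩
  | inr h =>
    obtain ⟨t, ht⟩ := TopologicalSpace.exists_dense_seq S
    obtain ⟨g, hg⟩ := exists_isometric_seq hM t
    have happrox : ∀ (x : S) (k : ℕ), ∃ n : ℕ, dist (t n) x < 1 / (k + 1 : ℝ) := by
      intro x k
      obtain ⟨m, hm⟩ := Metric.denseRange_iff.1 ht x (1 / (k + 1 : ℝ)) (by positivity)
      exact ⟨m, by rwa [dist_comm]⟩
    choose n hn using happrox
    have hconv : ∀ x : S, Tendsto (fun k => t (n x k)) atTop (𝓝 x) := by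
      intro x
      rw [tendsto_iff_dist_tendsto_zero]
      apply squeeze_zero (fun k => dist_nonneg) (fun k => (hn x k).le)
      exact tendsto_one_div_add_atTop_nhds_zero_nat
    have hcauchy : ∀ x : S, CauchySeq (fun k => g (n x k)) := by
      intro x
      have h1 : CauchySeq (fun k => t (n x k)) := (hconv x).cauchySeq
      rw [Metric.cauchySeq_iff] at h1 ⊢
      intro ε hε
      obtain ⟨N, hN⟩ := h1 ε hε
      exact ⟨N, fun a ha b hb => by rw [hg]; exact hN a ha b hb⟩
    have hlim : ∀ x : S, ∃ L : M, Tendsto (fun k => g (n x k)) atTop (𝓝 L) :=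
      fun x => cauchySeq_tendsto_of_complete (hcauchy x)
    choose f hf using hlim
    refine ⟨f, Isometry.of_dist_eq fun x y => ?_⟩
    have h1 : Tendsto (fun k => dist (g (n x k)) (g (n y k))) atTop (𝓝 (dist (f x) (f y))) :=
      (hf x).dist (hf y)
    have h2 : Tendsto (fun k => dist (t (n x k)) (t (n y k))) atTop (𝓝 (dist x y)) :=
      (hconv x).dist (hconv y)
    have heq : (fun k => dist (g (n x k)) (g (n y k)))
        = fun k => dist (t (n x k)) (t (n y k)) := funext fun k => hg _ _
    rw [heq] at h1
    exact tendsto_nhds_unique h1 h2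
end

section
/- Let 𝒢 be a class of topological groups such that every Hausdorff topological group embeds as a topological subgroup into a direct product of members of 𝒢, and assume every topological group embeds into a minimal topologically simple group. Then every Hausdorff topological group embeds as a topological subgroup into a single member of 𝒢. -/
universe u

/-- A bundled Hausdorff topological group. -/
structure TopGroupCat : Type (u + 1) where
  carrier : Type u
  [grp : Group carrier]
  [top : TopologicalSpace carrier]
  [tgrp : IsTopologicalGroup carrier]
  [t2 : T2Space carrier]

attribute [instance] TopGroupCat.grp TopGroupCat.top TopGroupCat.tgrp TopGroupCat.t2

/-- `H` embeds in `K` as a topological subgroup: there is an injective continuous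
homomorphism which is a topological embedding onto its image. -/
def EmbedsIn (H K : TopGroupCat.{u}) : Prop :=
  ∃ f : H.carrier →* K.carrier, Function.Injective f ∧ Topology.IsInducing f

/-- A topological group is minimal if it admits no strictly coarser Hausdorff group
topology. -/
def IsMinimal (K : TopGroupCat.{u}) : Prop :=
  ∀ t' : TopologicalSpace K.carrier,
    @IsTopologicalGroup K.carrier t' _ → @T2Space K.carrier t' → K.top ≤ t' → t' = K.top

/-- A topological group is topologically simple if its only closed normal subgroups are
the whole group and the trivial subgroup. -/
def TopSimple (K : TopGroupCat.{u}) : Prop :=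
  ∀ N : Subgroup K.carrier, N.Normal → IsClosed (N : Set K.carrier) → N = ⊥ ∨ N = ⊤

/-- Any two topologies on a subsingleton coincide. -/
lemma topology_subsingleton {α : Type u} [Subsingleton α]
    (t t' : TopologicalSpace α) : t = t' := by
  apply TopologicalSpace.ext
  ext s
  rcases s.eq_empty_or_nonempty with h | ⟨x, hx⟩
  · simp [h]
  · have : s = Set.univ := by
      ext y; simp [Subsingleton.elim y x, hx]
    simp [this]

/-- A nontrivial Hausdorff topological group (discrete integers). -/
def ZCat : TopGroupCat.{u} :=
  letI t : TopologicalSpace (Multiplicative (ULift.{u} ℤ)) := ⊥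
  haveI : DiscreteTopology (Multiplicative (ULift.{u} ℤ)) := ⟨rfl⟩
  haveI : IsTopologicalGroup (Multiplicative (ULift.{u} ℤ)) :=
    { toContinuousMul := ⟨continuous_of_discreteTopology⟩
      toContinuousInv := ⟨continuous_of_discreteTopology⟩ }
  { carrier := Multiplicative (ULift.{u} ℤ) }

lemma ZCat_nontrivial : Nontrivial (ZCat.{u}).carrier :=
  inferInstanceAs (Nontrivial (Multiplicative (ULift.{u} ℤ)))

/-- Let `𝒢` (given by the predicate `P`) be a class of topological groups such that every
Hausdorff topological group embeds as a topological subgroup into a direct product of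
members of `𝒢`, and assume every topological group embeds into a minimal topologically
simple group. Then every Hausdorff topological group embeds as a topological subgroup into
a single member of `𝒢`. -/
theorem subgroup_of_single_factor (P : TopGroupCat.{u} → Prop)
    (hprod : ∀ H : TopGroupCat.{u}, ∃ (ι : Type u) (K : ι → TopGroupCat.{u}),
      (∀ i, P (K i)) ∧ EmbedsIn H ⟨∀ i, (K i).carrier⟩)
    (hmin : ∀ H : TopGroupCat.{u}, ∃ M : TopGroupCat.{u},
      IsMinimal M ∧ TopSimple M ∧ EmbedsIn H M) :
    ∀ H : TopGroupCat.{u}, ∃ K : TopGroupCat.{u}, P K ∧ EmbedsIn H K := by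
  intro H
  obtain ⟨M, hMmin, hMsimple, g, hginj, hgind⟩ := hmin H
  obtain ⟨ι, K, hPK, f, hfinj, hfind⟩ := hprod M
  -- The coordinate projections composed with f
  set p : ∀ i : ι, M.carrier →* (K i).carrier :=
    fun i => (Pi.evalMonoidHom (fun i => (K i).carrier) i).comp f with hp
  have hpcont : ∀ i, Continuous (p i) :=
    fun i => (continuous_apply i).comp hfind.continuous
  by_cases hex : ∃ i, Function.Injective (p i)
  · obtain ⟨i, hpi⟩ := hex
    refine ⟨K i, hPK i, (p i).comp g, hpi.comp hginj, ?_⟩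
    -- Use minimality to show p i is inducing, then compose
    have hkey : Topology.IsInducing (p i) := by
      have htg : @IsTopologicalGroup M.carrier (TopologicalSpace.induced (p i) (K i).top) _ := topologicalGroup_induced (p i)
      have hemb : @Topology.IsEmbedding _ _ (TopologicalSpace.induced (p i) (K i).top) (K i).top (p i) :=
        @Topology.IsEmbedding.mk _ _ (TopologicalSpace.induced (p i) (K i).top) (K i).top (p i)
          (@Topology.IsInducing.mk _ _ (TopologicalSpace.induced (p i) (K i).top) (K i).top (p i) rfl) hpi
      have ht2 : @T2Space M.carrier (TopologicalSpace.induced (p i) (K i).top) :=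
        @Topology.IsEmbedding.t2Space _ _ (TopologicalSpace.induced (p i) (K i).top) (K i).top (K i).t2 (p i) hemb
      have hle : M.top ≤ (TopologicalSpace.induced (p i) (K i).top) := continuous_iff_le_induced.mp (hpcont i)
      have := hMmin (TopologicalSpace.induced (p i) (K i).top) htg ht2 hle
      exact ⟨this.symm⟩
    exact hkey.comp hgind
  · -- all projections are non-injective, hence trivial; M is a subsingleton
    push_neg at hex
    have hker : ∀ i, (p i).ker = ⊤ := by
      intro i
      rcases hMsimple (p i).ker (MonoidHom.normal_ker _)
        (IsClosed.preimage (hpcont i) isClosed_singleton) with h | h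
      · exact absurd ((MonoidHom.ker_eq_bot_iff _).mp h) (hex i)
      · exact h
    have hMsub : Subsingleton M.carrier := by
      constructor
      intro a b
      apply hfinj
      funext i
      have ha : p i a = 1 := MonoidHom.mem_ker.mp (by rw [hker i]; trivial)
      have hb : p i b = 1 := MonoidHom.mem_ker.mp (by rw [hker i]; trivial)
      simpa [hp] using ha.trans hb.symm
    have hHsub : Subsingleton H.carrier :=
      ⟨fun a b => hginj (Subsingleton.elim (g a) (g b))⟩
    -- Get some member of the class
    obtain ⟨ι', K', hPK', f', hf'inj, _⟩ := hprod ZCat.{u}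
    have hι' : Nonempty ι' := by
      by_contra hempty
      haveI : IsEmpty ι' := not_nonempty_iff.mp hempty
      haveI : Subsingleton (∀ i, (K' i).carrier) := inferInstance
      haveI := ZCat_nontrivial.{u}
      exact absurd (⟨fun a b => hf'inj (Subsingleton.elim _ _)⟩ :
        Subsingleton ZCat.{u}.carrier) (not_subsingleton _)
    obtain ⟨i⟩ := hι'
    refine ⟨K' i, hPK' i, 1, fun a b _ => Subsingleton.elim a b, ?_⟩
    haveI := hHsub
    exact ⟨topology_subsingleton _ _⟩
end

section
/- Let G be a topological group, E a Banach space, and π: G → Iso(E) a strongly continuous representation of G by linear isometries. If E is reflexive, then for every ξ ∈ E and every bounded linear functional φ ∈ E*, the matrix coefficient g ↦ φ(π(g)ξ) is a weakly almost periodic function on G. -/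
/-- Left translation `(g · f)(x) = f (g x)` on bounded continuous functions. -/
def ltrans {G : Type*} [Group G] [TopologicalSpace G] [IsTopologicalGroup G] (g : G)
    (f : BoundedContinuousFunction G ℝ) : BoundedContinuousFunction G ℝ :=
  f.compContinuous ⟨fun x => g * x, continuous_mul_left g⟩

/-- The weak topology on a normed space `B`: the coarsest topology making every bounded
linear functional continuous. -/
def weakTop (B : Type*) [NormedAddCommGroup B] [NormedSpace ℝ B] : TopologicalSpace B :=
  ⨅ ψ : B →L[ℝ] ℝ, TopologicalSpace.induced ψ inferInstance

section aux

variable {G E : Type*} [Group G] [TopologicalSpace G] [IsTopologicalGroup G]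
  [NormedAddCommGroup E] [NormedSpace ℝ E]

/-- The function `g ↦ χ (π g ξ)` as a bounded continuous function. -/
noncomputable def coeffFun (π : G →* (E ≃ₗᵢ[ℝ] E)) (hπ : ∀ ξ : E, Continuous fun g : G => π g ξ)
    (ξ : E) (χ : StrongDual ℝ E) : BoundedContinuousFunction G ℝ :=
  BoundedContinuousFunction.ofNormedAddCommGroup (fun g => χ (π g ξ))
    (χ.continuous.comp (hπ ξ)) (‖χ‖ * ‖ξ‖)
    (fun g => by simpa [(π g).norm_map] using χ.le_opNorm (π g ξ))

@[simp] theorem coeffFun_apply (π : G →* (E ≃ₗᵢ[ℝ] E))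
    (hπ : ∀ ξ : E, Continuous fun g : G => π g ξ) (ξ : E) (χ : StrongDual ℝ E) (g : G) :
    coeffFun π hπ ξ χ g = χ (π g ξ) := rfl

/-- `coeffFun` as a continuous linear map from the dual. -/
noncomputable def coeffCLM (π : G →* (E ≃ₗᵢ[ℝ] E)) (hπ : ∀ ξ : E, Continuous fun g : G => π g ξ)
    (ξ : E) : StrongDual ℝ E →L[ℝ] BoundedContinuousFunction G ℝ :=
  LinearMap.mkContinuous
    { toFun := coeffFun π hπ ξ
      map_add' := fun χ₁ χ₂ => by ext g; simp
      map_smul' := fun c χ => by ext g; simp }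
    ‖ξ‖
    (fun χ => by
      rw [mul_comm]
      show ‖coeffFun π hπ ξ χ‖ ≤ ‖χ‖ * ‖ξ‖
      exact BoundedContinuousFunction.norm_ofNormedAddCommGroup_le _
        (mul_nonneg (norm_nonneg _) (norm_nonneg _))
        (fun g => by simpa [(π g).norm_map] using χ.le_opNorm (π g ξ)))

@[simp] theorem coeffCLM_apply (π : G →* (E ≃ₗᵢ[ℝ] E))
    (hπ : ∀ ξ : E, Continuous fun g : G => π g ξ) (ξ : E) (χ : StrongDual ℝ E) (g : G) :
    coeffCLM π hπ ξ χ g = χ (π g ξ) := rfl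

theorem weakTop_t2 (B : Type*) [NormedAddCommGroup B] [NormedSpace ℝ B] :
    @T2Space B (weakTop B) := by
  have heq : weakTop B =
      TopologicalSpace.induced (fun f (ψ : StrongDual ℝ B) => ψ f) Pi.topologicalSpace := by
    rw [weakTop, Pi.topologicalSpace, induced_iInf]
    exact iInf_congr fun ψ =>
      (induced_compose (f := fun f (ψ' : StrongDual ℝ B) => ψ' f)
        (g := fun p => p ψ)).symm
  have hemb : @Topology.IsEmbedding B _ (weakTop B) _ (fun f (ψ : StrongDual ℝ B) => ψ f) :=
    Topology.IsEmbedding.mk (tX := weakTop B) (Topology.IsInducing.mk (tX := weakTop B) heq) fun f₁ f₂ h =>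
      (NormedSpace.eq_iff_forall_dual_eq (𝕜 := ℝ)).2 fun ψ => congrFun h ψ
  letI := weakTop B
  exact hemb.t2Space

end aux

/-- Let `π : G → Iso(E)` be a strongly continuous representation of a topological group
`G` by linear isometries of a Banach space `E`. If `E` is reflexive, then every matrix
coefficient `g ↦ φ (π g ξ)` is a weakly almost periodic function on `G`: it is a bounded
continuous function whose set of left translates is relatively compact in the weak topology
of the Banach space `C^b(G)`. -/
theorem matrix_coefficient_wap (G E : Type*) [Group G] [TopologicalSpace G]
    [IsTopologicalGroup G] [NormedAddCommGroup E] [NormedSpace ℝ E] [CompleteSpace E]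
    (π : G →* (E ≃ₗᵢ[ℝ] E)) (hπ : ∀ ξ : E, Continuous fun g : G => π g ξ)
    (hrefl : Function.Surjective (NormedSpace.inclusionInDoubleDual ℝ E))
    (ξ : E) (φ : E →L[ℝ] ℝ) :
    ∃ F : BoundedContinuousFunction G ℝ,
      (∀ g : G, F g = φ (π g ξ)) ∧
      @IsCompact (BoundedContinuousFunction G ℝ) (weakTop _)
        (@closure (BoundedContinuousFunction G ℝ) (weakTop _)
          (Set.range fun g : G => ltrans g F)) := by
  classical
  set Θ := coeffCLM π hπ ξ with hΘ
  refine ⟨Θ φ, fun g => rfl, ?_⟩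
  have hT2 : @T2Space _ (weakTop (BoundedContinuousFunction G ℝ)) := weakTop_t2 _
  -- continuity of Θ from the weak-star topology to the weak topology
  have hcont : @Continuous (WeakDual ℝ E) _ _ (weakTop (BoundedContinuousFunction G ℝ))
      (fun χ : WeakDual ℝ E => Θ (WeakDual.toStrongDual χ)) := by
    rw [weakTop, continuous_iInf_rng]
    intro ψ
    rw [continuous_induced_rng]
    obtain ⟨x, hx⟩ := hrefl (ψ.comp Θ)
    have key : (fun χ : WeakDual ℝ E => ψ (Θ (WeakDual.toStrongDual χ)))
        = fun χ : WeakDual ℝ E => χ x := by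
      funext χ
      have := congrFun (congrArg DFunLike.coe hx) (WeakDual.toStrongDual χ)
      simpa [NormedSpace.dual_def] using this.symm
    rw [show (⇑ψ ∘ fun χ : WeakDual ℝ E => Θ (WeakDual.toStrongDual χ))
        = fun χ : WeakDual ℝ E => ψ (Θ (WeakDual.toStrongDual χ)) from rfl, key]
    exact WeakDual.eval_continuous x
  -- the closed ball of radius ‖φ‖ in the dual is weak-star compact
  have hball : IsCompact
      (WeakDual.toStrongDual ⁻¹' Metric.closedBall (0 : StrongDual ℝ E) ‖φ‖) :=
    WeakDual.isCompact_closedBall 0 ‖φ‖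
  set K := (fun χ : WeakDual ℝ E => Θ (WeakDual.toStrongDual χ)) ''
    (WeakDual.toStrongDual ⁻¹' Metric.closedBall (0 : StrongDual ℝ E) ‖φ‖) with hK
  have hKcompact : @IsCompact _ (weakTop (BoundedContinuousFunction G ℝ)) K :=
    @IsCompact.image _ _ _ (weakTop (BoundedContinuousFunction G ℝ)) _ _ hball hcont
  have hKclosed : @IsClosed _ (weakTop (BoundedContinuousFunction G ℝ)) K :=
    @IsCompact.isClosed _ (weakTop (BoundedContinuousFunction G ℝ)) hT2 _ hKcompact
  -- each translate lies in K
  have hsub : (Set.range fun g : G => ltrans g (Θ φ)) ⊆ K := by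
    rintro _ ⟨g, rfl⟩
    set χg : StrongDual ℝ E := φ.comp (π g).toLinearIsometry.toContinuousLinearMap with hχg
    refine ⟨WeakDual.toStrongDual.symm χg, ?_, ?_⟩
    · simp only [Set.mem_preimage, Metric.mem_closedBall, dist_zero_right]
      refine le_trans (le_of_eq rfl) ?_
      refine ContinuousLinearMap.opNorm_le_bound _ (norm_nonneg φ) fun y => ?_
      calc ‖χg y‖ = ‖φ (π g y)‖ := rfl
        _ ≤ ‖φ‖ * ‖(π g) y‖ := φ.le_opNorm _
        _ = ‖φ‖ * ‖y‖ := by rw [(π g).norm_map]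
    · ext x
      show χg (π x ξ) = (Θ φ) (g * x)
      show φ ((π g) ((π x) ξ)) = φ ((π (g * x)) ξ)
      rw [map_mul π g x, LinearIsometryEquiv.coe_mul]
      rfl
  letI := weakTop (BoundedContinuousFunction G ℝ)
  haveI : @T2Space (BoundedContinuousFunction G ℝ) (weakTop _) := hT2
  exact hKcompact.of_isClosed_subset isClosed_closure (closure_minimal hsub hKclosed)
end

section
/- Let G be a complete metrizable abelian topological group that is topologically generated by the union of countably many subgroups each topologically isomorphic to the circle group 𝕋 = ℝ/ℤ. Then G is monothetic: there exists an element g ∈ G whose generated cyclic subgroup is dense in G. -/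
open Real Set Filter Topology
open scoped Uniformity

private lemma circle_exp_nat_mul (θ : ℝ) (N : ℕ) : Circle.exp (N * θ) = Circle.exp θ ^ N := by
  induction N with
  | zero => simp
  | succ n ih =>
    have h : ((n + 1 : ℕ) : ℝ) * θ = n * θ + θ := by push_cast; ring
    rw [h, Circle.exp_add, ih, pow_succ]

/-- For any `z y : Circle` and `ε > 0`, for all sufficiently large `N` there is an `N`-th root
of `y` within `ε` of `z`. -/
private lemma circle_root_approx (z y : Circle) {ε : ℝ} (hε : 0 < ε) :
    ∃ N₀ : ℕ, ∀ N : ℕ, N₀ ≤ N → 0 < N → ∃ c : Circle, c ^ N = y ∧ dist c z < ε := by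
  obtain ⟨δ, hδ, hcont⟩ := Metric.continuousAt_iff.1
    (Circle.exp.continuous.continuousAt (x := Complex.arg (z : ℂ))) ε hε
  refine ⟨⌈π / δ⌉₊ + 1, fun N hN hNpos => ?_⟩
  set a := Complex.arg (z : ℂ) with ha
  set b := Complex.arg (y : ℂ) with hb
  set x : ℝ := (N * a - b) / (2 * π) with hx
  set k : ℤ := round x with hk
  set θ : ℝ := (b + 2 * π * k) / N with hθ
  have hπ : (0 : ℝ) < π := Real.pi_pos
  have hNR : (0 : ℝ) < N := by exact_mod_cast hNpos
  have hroot : Circle.exp θ ^ N = y := by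
    have hNθ : (N : ℝ) * θ = b + k * (2 * π) := by
      rw [hθ]; field_simp
    rw [← circle_exp_nat_mul, hNθ, Circle.exp_add, Circle.exp_int_mul_two_pi, mul_one, hb,
      Circle.exp_arg]
  have hdiff : θ - a = 2 * π * (k - x) / N := by
    rw [hθ, hx]; field_simp; ring
  have habs : |θ - a| ≤ π / N := by
    rw [hdiff, abs_div, abs_mul, abs_of_pos (by positivity : (0:ℝ) < 2 * π),
      abs_of_pos hNR]
    have h1 : |(k : ℝ) - x| ≤ 1 / 2 := by
      rw [abs_sub_comm, hk]; exact abs_sub_round x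
    calc 2 * π * |(k : ℝ) - x| / N ≤ 2 * π * (1 / 2) / N := by gcongr
      _ = π / N := by ring
  have hsmall : |θ - a| < δ := by
    refine lt_of_le_of_lt habs ?_
    rw [div_lt_iff₀ hNR]
    have h1 : π / δ ≤ (⌈π / δ⌉₊ : ℝ) := Nat.le_ceil _
    have h2 : ((⌈π / δ⌉₊ : ℕ) : ℝ) + 1 ≤ (N : ℝ) := by exact_mod_cast hN
    have h3 : π / δ < (N : ℝ) := by linarith
    rw [div_lt_iff₀ hδ] at h3
    linarith [h3]
  refine ⟨Circle.exp θ, hroot, ?_⟩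
  have := hcont (show dist θ a < δ by rwa [Real.dist_eq])
  rwa [ha, Circle.exp_arg] at this

private lemma prod_pad {G : Type*} [CommMonoid G] (φ : ℕ → Circle →* G) {s t : Finset ℕ}
    (h : s ⊆ t) (f : ℕ → Circle) :
    ∏ n ∈ t, φ n (if n ∈ s then f n else 1) = ∏ n ∈ s, φ n (f n) := by
  rw [← Finset.prod_subset h (fun x _ hx => by simp [hx])]
  exact Finset.prod_congr rfl fun x hx => by simp [hx]

/-- Rolewicz's lemma: a complete metrizable abelian topological group that is
topologically generated by the union of countably many subgroups, each topologically
isomorphic to the circle group `𝕋`, is monothetic: some element generates a dense cyclic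
subgroup. -/
theorem rolewicz_monothetic (G : Type*) [CommGroup G] [UniformSpace G] [IsUniformGroup G]
    [CompleteSpace G] [TopologicalSpace.MetrizableSpace G]
    (H : ℕ → Subgroup G)
    (hcirc : ∀ n : ℕ, ∃ e : Circle ≃* H n, Continuous e ∧ Continuous e.symm)
    (hgen : Dense ((Subgroup.closure (⋃ n : ℕ, (H n : Set G)) : Subgroup G) : Set G)) :
    ∃ g : G, Dense ((Subgroup.zpowers g : Subgroup G) : Set G) := by
  classical
  choose e he hesymm using hcirc
  set φ : ℕ → Circle →* G := fun n => ((H n).subtype).comp (e n).toMonoidHom with hφ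
  have hφcont : ∀ n, Continuous fun z => φ n z := fun n =>
    continuous_subtype_val.comp (he n)
  have hφmem : ∀ n z, φ n z ∈ H n := fun n z => (e n z).2
  set k : Set G := ⋃ n : ℕ, (H n : Set G) with hkdef
  -- representation of elements of the abstract subgroup closure as finite products
  have rep : ∀ w ∈ Subgroup.closure k, ∃ (s : Finset ℕ) (f : ℕ → Circle),
      w = ∏ n ∈ s, φ n (f n) := by
    intro w hw
    induction hw using Subgroup.closure_induction with
    | mem x hx =>
      rw [hkdef, Set.mem_iUnion] at hx
      obtain ⟨n, hn⟩ := hx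
      refine ⟨{n}, fun _ => (e n).symm ⟨x, hn⟩, ?_⟩
      rw [Finset.prod_singleton]
      show x = ((e n ((e n).symm ⟨x, hn⟩) : H n) : G)
      rw [MulEquiv.apply_symm_apply]
    | one => exact ⟨∅, fun _ => 1, by simp⟩
    | mul x y hx hy ihx ihy =>
      obtain ⟨s₁, f₁, h₁⟩ := ihx
      obtain ⟨s₂, f₂, h₂⟩ := ihy
      have hsub1 : s₁ ⊆ s₁ ∪ s₂ := fun a ha => Finset.mem_union_left _ ha
      have hsub2 : s₂ ⊆ s₁ ∪ s₂ := fun a ha => Finset.mem_union_right _ ha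
      refine ⟨s₁ ∪ s₂,
        fun n => (if n ∈ s₁ then f₁ n else 1) * (if n ∈ s₂ then f₂ n else 1), ?_⟩
      simp only [map_mul, Finset.prod_mul_distrib, prod_pad φ hsub1, prod_pad φ hsub2]
      rw [h₁, h₂]
    | inv x hx ihx =>
      obtain ⟨s, f, h⟩ := ihx
      refine ⟨s, fun n => (f n)⁻¹, ?_⟩
      rw [h]
      simp [Finset.prod_inv_distrib]
  -- a countable dense "word" family
  obtain ⟨q, hq⟩ : ∃ q : ℕ → Circle, DenseRange q :=
    ⟨TopologicalSpace.denseSeq Circle, TopologicalSpace.denseRange_denseSeq Circle⟩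
  set el : List (ℕ × ℕ) → G := fun l => (l.map fun p => φ p.1 (q p.2)).prod with hel
  have hT1 : ∀ l, el l ∈ Subgroup.closure k := by
    intro l
    induction l with
    | nil => simpa [hel] using one_mem _
    | cons p l ih =>
      rw [hel]
      simp only [List.map_cons, List.prod_cons]
      exact mul_mem (Subgroup.subset_closure (Set.mem_iUnion.2 ⟨p.1, hφmem p.1 (q p.2)⟩)) ih
  -- density of the word family
  have hTdense : Dense (Set.range el) := by
    set M : Submonoid G :=
      { carrier := Set.range el
        one_mem' := ⟨[], by simp [hel]⟩
        mul_mem' := by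
          rintro a b ⟨l₁, rfl⟩ ⟨l₂, rfl⟩
          exact ⟨l₁ ++ l₂, by simp [hel]⟩ } with hM
    have hHM : ∀ n, (H n : Set G) ⊆ closure (Set.range el) := by
      intro n x hx
      have hx' : x = φ n ((e n).symm ⟨x, hx⟩) := by
        show x = ((e n ((e n).symm ⟨x, hx⟩) : H n) : G)
        rw [MulEquiv.apply_symm_apply]
      have hsub : (fun z => φ n z) '' Set.range q ⊆ Set.range el := by
        rintro _ ⟨_, ⟨j, rfl⟩, rfl⟩
        exact ⟨[(n, j)], by simp [hel]⟩
      have : x ∈ (fun z => φ n z) '' closure (Set.range q) := by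
        rw [hq.closure_eq]
        exact ⟨(e n).symm ⟨x, hx⟩, trivial, hx'.symm⟩
      exact closure_mono hsub (image_closure_subset_closure_image (hφcont n) this)
    have hMc : (Subgroup.closure k : Set G) ⊆ closure (Set.range el) := by
      have h1 : Submonoid.closure (k ∪ k⁻¹) ≤ M.topologicalClosure := by
        rw [Submonoid.closure_le]
        have hkinv : k⁻¹ = k := by
          ext x
          simp only [Set.mem_inv, hkdef, Set.mem_iUnion, SetLike.mem_coe]
          exact exists_congr fun n => by rw [inv_mem_iff]
        rw [hkinv, Set.union_self]
        intro x hx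
        rw [hkdef, Set.mem_iUnion] at hx
        obtain ⟨n, hn⟩ := hx
        exact hHM n hn
      intro x hx
      have : x ∈ (Subgroup.closure k).toSubmonoid := hx
      rw [Subgroup.closure_toSubmonoid] at this
      exact h1 this
    have h2 : closure ((Subgroup.closure k : Subgroup G) : Set G) ⊆ closure (Set.range el) := by
      rw [← closure_closure (s := Set.range el)]
      exact closure_mono hMc
    rw [dense_iff_closure_eq] at hgen ⊢
    rw [hgen] at h2
    exact eq_univ_of_univ_subset h2
  -- Baire category setup
  haveI : (𝓤 G).IsCountablyGenerated := by
    rw [uniformity_eq_comap_nhds_one G]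
    infer_instance
  -- neighbourhood bases
  have hbasis : ∀ t : G, ∃ V : ℕ → Set G,
      (∀ j, IsOpen (V j) ∧ t ∈ V j) ∧ ∀ W ∈ 𝓝 t, ∃ j, V j ⊆ W := by
    intro t
    obtain ⟨b, hb⟩ := (𝓝 t).exists_antitone_basis
    refine ⟨fun j => interior (b j), fun j =>
      ⟨isOpen_interior, mem_interior_iff_mem_nhds.2 (hb.1.mem_of_mem trivial)⟩, fun W hW => ?_⟩
    obtain ⟨j, -, hj⟩ := hb.1.mem_iff.1 hW
    exact ⟨j, interior_subset.trans hj⟩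
  choose V hV1 hV2 using hbasis
  set U : List (ℕ × ℕ) × ℕ → Set G :=
    fun p => ⋃ N : ℕ, (fun g : G => g ^ N) ⁻¹' (V (el p.1) p.2) with hU
  have hUopen : ∀ p, IsOpen (U p) := fun p =>
    isOpen_iUnion fun N => (hV1 (el p.1) p.2).1.preimage (continuous_pow N)
  have hUdense : ∀ p, Dense (U p) := by
    rintro ⟨l, j⟩
    rw [dense_iff_inter_open]
    intro O hO hOne
    obtain ⟨w, hwT, hwO⟩ := hTdense.exists_mem_open hO hOne
    obtain ⟨l', rfl⟩ := hwT
    obtain ⟨s₁, f₁, h₁⟩ := rep _ (hT1 l')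
    obtain ⟨s₂, f₂, h₂⟩ := rep _ (hT1 l)
    have hsub1 : s₁ ⊆ s₁ ∪ s₂ := fun a ha => Finset.mem_union_left _ ha
    have hsub2 : s₂ ⊆ s₁ ∪ s₂ := fun a ha => Finset.mem_union_right _ ha
    set s : Finset ℕ := s₁ ∪ s₂ with hs
    set z : ℕ → Circle := fun n => if n ∈ s₁ then f₁ n else 1 with hz
    set y : ℕ → Circle := fun n => if n ∈ s₂ then f₂ n else 1 with hy
    have hw' : el l' = ∏ n ∈ s, φ n (z n) := by rw [hz, prod_pad φ hsub1]; exact h₁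
    have ht' : el l = ∏ n ∈ s, φ n (y n) := by rw [hy, prod_pad φ hsub2]; exact h₂
    set F : (ℕ → Circle) → G := fun f => ∏ n ∈ s, φ n (f n) with hF
    have hFcont : Continuous F :=
      continuous_finset_prod _ fun n _ => (hφcont n).comp (continuous_apply n)
    have hzO : z ∈ F ⁻¹' O := by
      show F z ∈ O
      rw [hF]
      simp only []
      rw [← hw']
      exact hwO
    obtain ⟨I, u, hIu, hpi⟩ := isOpen_pi_iff.1 (hO.preimage hFcont) z hzO
    have hN0 : ∀ i : ℕ, ∃ N₀ : ℕ, ∀ N : ℕ, N₀ ≤ N → 0 < N →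
        ∃ c : Circle, c ^ N = y i ∧ (i ∈ I → c ∈ u i) := by
      intro i
      by_cases hi : i ∈ I
      · obtain ⟨ε, hε, hball⟩ := Metric.isOpen_iff.1 (hIu i hi).1 (z i) (hIu i hi).2
        obtain ⟨N₀, h⟩ := circle_root_approx (z i) (y i) hε
        refine ⟨N₀, fun N hN hNp => ?_⟩
        obtain ⟨c, hc1, hc2⟩ := h N hN hNp
        exact ⟨c, hc1, fun _ => hball hc2⟩
      · obtain ⟨N₀, h⟩ := circle_root_approx 1 (y i) one_pos
        refine ⟨N₀, fun N hN hNp => ?_⟩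
        obtain ⟨c, hc1, -⟩ := h N hN hNp
        exact ⟨c, hc1, fun h' => absurd h' hi⟩
    choose N₀ hN₀ using hN0
    set N : ℕ := max 1 ((I ∪ s).sup N₀) with hNdef
    have hN1 : 0 < N := lt_of_lt_of_le one_pos (le_max_left _ _)
    have hNi : ∀ i ∈ I ∪ s, N₀ i ≤ N := fun i hi =>
      le_trans (Finset.le_sup hi) (le_max_right _ _)
    have hc : ∀ i : ℕ, ∃ c : Circle, (i ∈ s → c ^ N = y i) ∧ (i ∈ I → c ∈ u i) := by
      intro i
      by_cases hi : i ∈ I ∪ s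
      · obtain ⟨c, h1, h2⟩ := hN₀ i N (hNi i hi) hN1
        exact ⟨c, fun _ => h1, h2⟩
      · exact ⟨z i, fun h' => absurd (Finset.mem_union_right _ h') hi,
          fun h' => absurd (Finset.mem_union_left _ h') hi⟩
    choose c hc1 hc2 using hc
    have hcO : F c ∈ O := hpi fun i hi => hc2 i hi
    have hFcN : (F c) ^ N = el l := by
      rw [ht', hF]
      simp only []
      rw [← Finset.prod_pow]
      exact Finset.prod_congr rfl fun n hn => by rw [← map_pow, hc1 n hn]
    refine ⟨F c, hcO, ?_⟩
    rw [hU]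
    exact Set.mem_iUnion.2 ⟨N, by
      show (F c) ^ N ∈ V (el l) j
      rw [hFcN]
      exact (hV1 (el l) j).2⟩
  obtain ⟨g, hg⟩ : (⋂ p, U p).Nonempty :=
    (dense_iInter_of_isOpen hUopen hUdense).nonempty
  refine ⟨g, ?_⟩
  have hclos : ∀ l : List (ℕ × ℕ), el l ∈ closure ((Subgroup.zpowers g : Subgroup G) : Set G) := by
    intro l
    rw [mem_closure_iff_nhds]
    intro W hW
    obtain ⟨j, hj⟩ := hV2 (el l) W hW
    obtain ⟨N, hN⟩ := Set.mem_iUnion.1 (Set.mem_iInter.1 hg (l, j))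
    exact ⟨g ^ N, hj hN, Subgroup.npow_mem_zpowers g N⟩
  have hsub : Set.range el ⊆ closure ((Subgroup.zpowers g : Subgroup G) : Set G) := by
    rintro _ ⟨l, rfl⟩
    exact hclos l
  rw [dense_iff_closure_eq]
  have h1 := closure_mono hsub
  rw [closure_closure, hTdense.closure_eq] at h1
  exact eq_univ_of_univ_subset h1
end
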